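/- arXiv:1409.3058 — 3 statements merged into one kernel-verified Lean document; each statement's English description precedes it below -/
import Mathlib

section
/- Let η be a quadratic form on a real vector space X. Suppose there is a vector b with η(b) > 0 and a linear functional b* with η negative definite on ker(b*). Then for any two linearly independent vectors u, v with η(u) > 0 and η(v) > 0, the restriction of η to span(u,v) is hyperbolic, i.e. takes both positive and negative values. -/
open MeasureTheory Pointwise Filter Set
noncomputable section
abbrev E2 := EuclideanSpace ℝ (Fin 2)
def mS (U : Set E2) : ℝ := (volume U).toReal
def InCone (U : Set E2) : Prop := U.Nonempty ∧ IsCompact U ∧ Convex ℝ U ∧ U = -U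
def seg (v : E2) (d : ℝ) : Set E2 := (fun t : ℝ => t • v) '' Set.Icc (-d) d
def perp (v : E2) : E2 := (WithLp.equiv 2 (Fin 2 → ℝ)).symm ![-(v 1), v 0]
def widthHalf (U : Set E2) (v : E2) : ℝ := sSup ((fun x => (inner ℝ x (perp v) : ℝ)) '' U)
def perim (U : Set E2) : ℝ :=
  limUnder (nhdsWithin 0 (Set.Ioi 0))
    (fun t : ℝ => (mS (U + t • Metric.closedBall (0 : E2) 1) - mS U - t ^ 2 * Real.pi) / t)
def Mpair (A B : Set E2) : ℝ := (mS (A + B) - mS A - mS B) / 2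
def Psi (U V : Set E2) : ℝ := 2 * mS U + 2 * mS V - mS (U + V)

theorem LinearIndependent.exists_ne_zero_mem_span_pair_ker {K V : Type*} [Field K]
    [AddCommGroup V] [Module K V] {u v : V} (hli : LinearIndependent K ![u, v])
    (f : V →ₗ[K] K) : ∃ w ∈ Submodule.span K ({u, v} : Set V), w ≠ 0 ∧ f w = 0 := by
  have hu : u ∈ Submodule.span K ({u, v} : Set V) := Submodule.subset_span (by simp)
  have hv : v ∈ Submodule.span K ({u, v} : Set V) := Submodule.subset_span (by simp)
  by_cases hfu : f u = 0
  · exact ⟨u, hu, hli.ne_zero 0, hfu⟩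
  refine ⟨f v • u - f u • v, Submodule.sub_mem _ (Submodule.smul_mem _ _ hu)
    (Submodule.smul_mem _ _ hv), fun hw => hfu ?_, by simp [mul_comm]⟩
  have := LinearIndependent.pair_iff.mp hli (f v) (-f u)
    (by rw [neg_smul, ← sub_eq_add_neg]; exact hw)
  exact neg_eq_zero.mp this.2

theorem quadratic_form_hyperbolic_on_planes_general
    (X : Type*) [AddCommGroup X] [Module ℝ X]
    (N : X →ₗ[ℝ] X →ₗ[ℝ] ℝ)
    (f : X →ₗ[ℝ] ℝ) (hneg : ∀ x : X, f x = 0 → x ≠ 0 → N x x < 0) :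
    ∀ u v : X, LinearIndependent ℝ ![u, v] → (0 < N u u ∨ 0 < N v v) →
      (∃ w ∈ Submodule.span ℝ ({u, v} : Set X), 0 < N w w) ∧
      (∃ w ∈ Submodule.span ℝ ({u, v} : Set X), N w w < 0) := by
  intro u v hli hpos
  constructor
  · rcases hpos with hu | hv
    · exact ⟨u, Submodule.subset_span (by simp), hu⟩
    · exact ⟨v, Submodule.subset_span (by simp), hv⟩
  · obtain ⟨w, hw, hw0, hfw⟩ := hli.exists_ne_zero_mem_span_pair_ker f
    exact ⟨w, hw, hneg w hfw hw0⟩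

/-- If a quadratic form `η(x) = N(x,x)` is positive on some vector `b` and negative definite
on the kernel of a linear functional, then it is hyperbolic on every plane spanned by linearly
independent `u`, `v` with `η(u) > 0` or `η(v) > 0`. -/
theorem quadratic_form_hyperbolic_on_planes
    (X : Type*) [AddCommGroup X] [Module ℝ X]
    (N : X →ₗ[ℝ] X →ₗ[ℝ] ℝ) (hsym : ∀ x y : X, N x y = N y x)
    (b : X) (hb : 0 < N b b)
    (f : X →ₗ[ℝ] ℝ) (hneg : ∀ x : X, f x = 0 → x ≠ 0 → N x x < 0) :
    ∀ u v : X, LinearIndependent ℝ ![u, v] → (0 < N u u ∨ 0 < N v v) →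
      (∃ w ∈ Submodule.span ℝ ({u, v} : Set X), 0 < N w w) ∧
      (∃ w ∈ Submodule.span ℝ ({u, v} : Set X), N w w < 0) :=
  quadratic_form_hyperbolic_on_planes_general X N f hneg
end
end

section
/- For compact convex centrally symmetric planar sets x, y with m*(x) > 0 and m*(y) > 0 as elements of X_S (in particular for sets in S), the inequality (½(m(x+y) − m(x) − m(y)))² ≥ m(x)·m(y) holds; for actual convex bodies this is equivalent to the Brunn–Minkowski inequality √(m(x+y)) ≥ √(m(x)) + √(m(y)). -/
open MeasureTheory Pointwise Filter Set
noncomputable section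
/-! Both claims reduce to Brunn–Minkowski `√|A| + √|B| ≤ √|A + B|` for compact convex `A`, `B`:
squaring it gives `(|A + B| - |A| - |B|) / 2 ≥ √(|A| |B|)`. To prove it, let `f`, `g`, `h` be the
lengths of the vertical sections of `A`, `B`, `A + B`, and `F`, `G` their maxima. For intervals Brunn–Minkowski is an equality, so `h (s + t) ≥ f s + g t`, and for
every level `0 < λ < 1` the superlevel sets `{f > λF}` and `{g > λG}`, which are intervals because
section lengths are concave, add up into `{h > λ(F + G)}`. Measuring these intervals and
integrating over `λ` with the layer-cake formula gives `|A|/F + |B|/G ≤ |A + B|/(F + G)`, and the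
Cauchy–Schwarz inequality turns this into `√|A| + √|B| ≤ √|A + B|`. -/

open Bornology

theorem Real.volume_eq_ediam_of_convex {s : Set ℝ} (hs : Convex ℝ s) (hb : IsBounded s) :
    volume s = Metric.ediam s := by
  refine le_antisymm (Real.volume_le_diam s) ?_
  rcases s.eq_empty_or_nonempty with rfl | hne
  · simp
  rw [Real.ediam_eq hb, ← Real.volume_Ioo]
  exact measure_mono ((hs.isConnected hne).Ioo_csInf_csSup_subset hb.bddBelow hb.bddAbove)

theorem Real.volume_add_of_convex {A B : Set ℝ} (hAc : Convex ℝ A) (hBc : Convex ℝ B)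
    (hAb : IsBounded A) (hBb : IsBounded B) (hA : A.Nonempty) (hB : B.Nonempty) :
    volume (A + B) = volume A + volume B := by
  rw [Real.volume_eq_ediam_of_convex (hAc.add hBc) (hAb.add hBb),
    Real.volume_eq_ediam_of_convex hAc hAb, Real.volume_eq_ediam_of_convex hBc hBb,
    Real.ediam_eq (hAb.add hBb), Real.ediam_eq hAb, Real.ediam_eq hBb,
    csSup_add hA hAb.bddAbove hB hBb.bddAbove, csInf_add hA hAb.bddBelow hB hBb.bddBelow,
    ← ENNReal.ofReal_add (sub_nonneg.2 (Real.sInf_le_sSup A hAb.bddBelow hAb.bddAbove))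
      (sub_nonneg.2 (Real.sInf_le_sSup B hBb.bddBelow hBb.bddAbove))]
  ring_nf

section LayerCake

variable {α : Type*} [MeasurableSpace α] (μ : Measure α) {φ : α → ℝ} {M : ℝ}

theorem lintegral_Ioi_measure_mul_lt (hφ : ∀ x, 0 ≤ φ x) (hφm : Measurable φ) (hM : 0 < M) :
    ∫⁻ l in Ioi 0, μ {x | l * M < φ x} =
      ENNReal.ofReal M⁻¹ * ∫⁻ x, ENNReal.ofReal (φ x) ∂μ := by
  have hlevel : ∀ l, {x | l * M < φ x} = {x | l < φ x * M⁻¹} := fun l =>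
    ext fun x => (lt_mul_inv_iff₀ hM).symm
  simp_rw [hlevel]
  rw [← lintegral_eq_lintegral_meas_lt μ
      (ae_of_all _ fun x => mul_nonneg (hφ x) (inv_nonneg.2 hM.le))
      (hφm.mul_const _).aemeasurable, ← lintegral_const_mul _ hφm.ennreal_ofReal]
  exact lintegral_congr fun x => by rw [ENNReal.ofReal_mul (hφ x), mul_comm]

theorem lintegral_Ioo_measure_mul_lt_of_le (hφ : ∀ x, 0 ≤ φ x) (hφm : Measurable φ)
    (hM : 0 < M) (hφM : ∀ x, φ x ≤ M) :
    ∫⁻ l in Ioo 0 1, μ {x | l * M < φ x} =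
      ENNReal.ofReal M⁻¹ * ∫⁻ x, ENNReal.ofReal (φ x) ∂μ := by
  have hempty : EqOn (fun l => μ {x | l * M < φ x}) 0 (Ici 1) := fun l hl => by
    have : {x | l * M < φ x} = ∅ := eq_empty_of_forall_notMem fun x hx =>
      (hφM x).not_gt ((le_mul_of_one_le_left hM.le hl).trans_lt hx)
    simp [this]
  rw [← lintegral_Ioi_measure_mul_lt μ hφ hφm hM, ← Ioo_union_Ici_eq_Ioi zero_lt_one,
    lintegral_union measurableSet_Ici ((Iio_disjoint_Ici le_rfl).mono_left Ioo_subset_Iio_self),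
    setLIntegral_congr_fun measurableSet_Ici hempty]
  simp

end LayerCake

def sectionLength (A : Set (ℝ × ℝ)) (s : ℝ) : ℝ := (volume (Prod.mk s ⁻¹' A)).toReal

section Sections

variable {A B : Set (ℝ × ℝ)}

theorem Convex.preimage_prodMk (hA : Convex ℝ A) (s : ℝ) : Convex ℝ (Prod.mk s ⁻¹' A) := by
  intro y hy z hz a b ha hb hab
  simpa [← add_mul, hab] using hA hy hz ha hb hab

theorem IsCompact.preimage_prodMk (hA : IsCompact A) (s : ℝ) : IsCompact (Prod.mk s ⁻¹' A) :=
  (hA.image continuous_snd).of_isClosed_subset (hA.isClosed.preimage (.prodMk_right s))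
    fun y hy => ⟨(s, y), hy, rfl⟩

theorem prodMk_preimage_add_subset (s t : ℝ) :
    Prod.mk s ⁻¹' A + Prod.mk t ⁻¹' B ⊆ Prod.mk (s + t) ⁻¹' (A + B) := by
  rintro _ ⟨y, hy, z, hz, rfl⟩
  exact ⟨(s, y), hy, (t, z), hz, rfl⟩

theorem prodMk_preimage_nonempty_iff {s : ℝ} :
    (Prod.mk s ⁻¹' A).Nonempty ↔ s ∈ Prod.fst '' A :=
  ⟨fun ⟨y, hy⟩ => ⟨(s, y), hy, rfl⟩, fun ⟨_, hp, hs⟩ => ⟨_, by rwa [← hs]⟩⟩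

theorem mem_fst_image_of_sectionLength_pos {s : ℝ} (h : 0 < sectionLength A s) :
    s ∈ Prod.fst '' A := by
  refine prodMk_preimage_nonempty_iff.1
    (nonempty_of_measure_ne_zero (μ := volume) fun h0 => ?_)
  simp [sectionLength, h0] at h

theorem measurable_sectionLength (hA : MeasurableSet A) : Measurable (sectionLength A) :=
  (measurable_measure_prodMk_left hA).ennreal_toReal

theorem sectionLength_nonneg (s : ℝ) : 0 ≤ sectionLength A s := ENNReal.toReal_nonneg

theorem sectionLength_le_iSup (hA : IsCompact A) (s : ℝ) :
    sectionLength A s ≤ ⨆ t, sectionLength A t :=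
  le_ciSup ⟨_, forall_mem_range.2 fun t => ENNReal.toReal_mono
    (hA.image continuous_snd).measure_lt_top.ne (measure_mono fun y hy => ⟨(t, y), hy, rfl⟩)⟩ s

theorem volume_eq_lintegral_sectionLength (hA : IsCompact A) :
    volume A = ∫⁻ s, ENNReal.ofReal (sectionLength A s) := by
  rw [Measure.volume_eq_prod, Measure.prod_apply hA.measurableSet]
  exact lintegral_congr fun s =>
    (ENNReal.ofReal_toReal (hA.preimage_prodMk s).measure_lt_top.ne).symm

theorem sectionLength_add_le (hAc : Convex ℝ A) (hBc : Convex ℝ B) (hAk : IsCompact A)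
    (hBk : IsCompact B) {s t : ℝ} (hs : s ∈ Prod.fst '' A) (ht : t ∈ Prod.fst '' B) :
    sectionLength A s + sectionLength B t ≤ sectionLength (A + B) (s + t) := by
  have hsum := Real.volume_add_of_convex (hAc.preimage_prodMk s) (hBc.preimage_prodMk t)
    (hAk.preimage_prodMk s).isBounded (hBk.preimage_prodMk t).isBounded
    (prodMk_preimage_nonempty_iff.2 hs) (prodMk_preimage_nonempty_iff.2 ht)
  rw [sectionLength, sectionLength, ← ENNReal.toReal_add
    (hAk.preimage_prodMk s).measure_lt_top.ne (hBk.preimage_prodMk t).measure_lt_top.ne, ← hsum]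
  exact ENNReal.toReal_mono ((hAk.add hBk).preimage_prodMk _).measure_lt_top.ne
    (measure_mono (prodMk_preimage_add_subset s t))

theorem concaveOn_sectionLength (hAc : Convex ℝ A) (hAk : IsCompact A) :
    ConcaveOn ℝ (Prod.fst '' A) (sectionLength A) := by
  refine ⟨hAc.linear_image (LinearMap.fst ℝ ℝ ℝ), fun s hs t ht a b ha hb hab => ?_⟩
  have hsub : a • Prod.mk s ⁻¹' A + b • Prod.mk t ⁻¹' A ⊆ Prod.mk (a • s + b • t) ⁻¹' A := by
    rintro _ ⟨_, ⟨y, hy, rfl⟩, _, ⟨z, hz, rfl⟩, rfl⟩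
    simpa using hAc hy hz ha hb hab
  have hvol := Real.volume_add_of_convex ((hAc.preimage_prodMk s).smul a)
    ((hAc.preimage_prodMk t).smul b) ((hAk.preimage_prodMk s).isBounded.smul₀ a)
    ((hAk.preimage_prodMk t).isBounded.smul₀ b) (prodMk_preimage_nonempty_iff.2 hs).smul_set
    (prodMk_preimage_nonempty_iff.2 ht).smul_set
  rw [Measure.addHaar_smul_of_nonneg _ ha, Measure.addHaar_smul_of_nonneg _ hb,
    Module.finrank_self, pow_one, pow_one] at hvol
  have := ENNReal.toReal_mono (hAk.preimage_prodMk _).measure_lt_top.ne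
    (hvol.symm.trans_le (measure_mono hsub))
  rwa [ENNReal.toReal_add
    (ENNReal.mul_ne_top ENNReal.ofReal_ne_top (hAk.preimage_prodMk s).measure_lt_top.ne)
    (ENNReal.mul_ne_top ENNReal.ofReal_ne_top (hAk.preimage_prodMk t).measure_lt_top.ne),
    ENNReal.toReal_mul, ENNReal.toReal_mul, ENNReal.toReal_ofReal ha,
    ENNReal.toReal_ofReal hb] at this

theorem convex_sectionLength_superlevel (hAc : Convex ℝ A) (hAk : IsCompact A) {a : ℝ}
    (ha : 0 ≤ a) : Convex ℝ {s | a < sectionLength A s} := by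
  have hdom : {s | a < sectionLength A s} = {s ∈ Prod.fst '' A | a < sectionLength A s} :=
    ext fun _ => ⟨fun h => ⟨mem_fst_image_of_sectionLength_pos (ha.trans_lt h), h⟩, And.right⟩
  exact hdom ▸ (concaveOn_sectionLength hAc hAk).convex_gt a

theorem isBounded_sectionLength_superlevel (hAk : IsCompact A) {a : ℝ} (ha : 0 ≤ a) :
    IsBounded {s | a < sectionLength A s} :=
  (hAk.image continuous_fst).isBounded.subset fun _ h =>
    mem_fst_image_of_sectionLength_pos (ha.trans_lt h)

theorem volume_sectionLength_superlevel_add_le (hAc : Convex ℝ A) (hBc : Convex ℝ B)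
    (hAk : IsCompact A) (hBk : IsCompact B) {a b : ℝ} (ha : 0 ≤ a) (hb : 0 ≤ b)
    (hA : ∃ s, a < sectionLength A s) (hB : ∃ t, b < sectionLength B t) :
    volume {s | a < sectionLength A s} + volume {t | b < sectionLength B t} ≤
      volume {r | a + b < sectionLength (A + B) r} := by
  rw [← Real.volume_add_of_convex (convex_sectionLength_superlevel hAc hAk ha)
    (convex_sectionLength_superlevel hBc hBk hb) (isBounded_sectionLength_superlevel hAk ha)
    (isBounded_sectionLength_superlevel hBk hb) hA hB]
  refine measure_mono ?_
  rintro _ ⟨s, hs, t, ht, rfl⟩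
  exact (add_lt_add hs ht).trans_le (sectionLength_add_le hAc hBc hAk hBk
    (mem_fst_image_of_sectionLength_pos (ha.trans_lt hs))
    (mem_fst_image_of_sectionLength_pos (hb.trans_lt ht)))

theorem iSup_sectionLength_pos (hA : IsCompact A) (hA0 : 0 < volume A) :
    0 < ⨆ s, sectionLength A s := by
  by_contra! h
  have hzero : ∀ s, sectionLength A s = 0 := fun s =>
    le_antisymm ((sectionLength_le_iSup hA s).trans h) (sectionLength_nonneg s)
  simp [volume_eq_lintegral_sectionLength hA, hzero] at hA0

theorem inv_mul_volume_add_inv_mul_volume_le (hAc : Convex ℝ A) (hBc : Convex ℝ B)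
    (hAk : IsCompact A) (hBk : IsCompact B) (hA : 0 < volume A) (hB : 0 < volume B) :
    ENNReal.ofReal (⨆ s, sectionLength A s)⁻¹ * volume A +
        ENNReal.ofReal (⨆ s, sectionLength B s)⁻¹ * volume B ≤
      ENNReal.ofReal ((⨆ s, sectionLength A s) + ⨆ s, sectionLength B s)⁻¹ * volume (A + B) := by
  set F := ⨆ s, sectionLength A s
  set G := ⨆ s, sectionLength B s
  have hF := iSup_sectionLength_pos hAk hA
  have hG := iSup_sectionLength_pos hBk hB
  have hmeas : Measurable fun l : ℝ => volume {s | l * F < sectionLength A s} :=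
    Antitone.measurable fun _ _ hl => measure_mono fun _ hs =>
      (mul_le_mul_of_nonneg_right hl hF.le).trans_lt hs
  rw [volume_eq_lintegral_sectionLength hAk, volume_eq_lintegral_sectionLength hBk,
    volume_eq_lintegral_sectionLength (hAk.add hBk),
    ← lintegral_Ioo_measure_mul_lt_of_le volume sectionLength_nonneg
      (measurable_sectionLength hAk.measurableSet) hF (sectionLength_le_iSup hAk),
    ← lintegral_Ioo_measure_mul_lt_of_le volume sectionLength_nonneg
      (measurable_sectionLength hBk.measurableSet) hG (sectionLength_le_iSup hBk),
    ← lintegral_Ioi_measure_mul_lt volume sectionLength_nonneg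
      (measurable_sectionLength (hAk.add hBk).measurableSet) (add_pos hF hG),
    ← lintegral_add_left hmeas]
  calc _ ≤ ∫⁻ l in Ioo 0 1, volume {r | l * (F + G) < sectionLength (A + B) r} :=
        setLIntegral_mono' measurableSet_Ioo fun l ⟨hl0, hl1⟩ => by
          rw [mul_add]
          exact volume_sectionLength_superlevel_add_le hAc hBc hAk hBk (by positivity)
            (by positivity) (exists_lt_of_lt_ciSup (mul_lt_of_lt_one_left hF hl1))
            (exists_lt_of_lt_ciSup (mul_lt_of_lt_one_left hG hl1))
    _ ≤ _ := lintegral_mono_set Ioo_subset_Ioi_self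

end Sections

theorem Real.sqrt_add_sqrt_le_sqrt_of_inv_mul_add_inv_mul_le {F G a b c : ℝ} (hF : 0 < F)
    (hG : 0 < G) (ha : 0 ≤ a) (hb : 0 ≤ b) (h : F⁻¹ * a + G⁻¹ * b ≤ (F + G)⁻¹ * c) :
    √a + √b ≤ √c := by
  refine Real.le_sqrt_of_sq_le (le_of_mul_le_mul_left ?_ (mul_pos hF hG))
  obtain ⟨x, hx, rfl⟩ : ∃ x, 0 ≤ x ∧ a = x ^ 2 :=
    ⟨√a, Real.sqrt_nonneg a, (Real.sq_sqrt ha).symm⟩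
  obtain ⟨y, hy, rfl⟩ : ∃ y, 0 ≤ y ∧ b = y ^ 2 :=
    ⟨√b, Real.sqrt_nonneg b, (Real.sq_sqrt hb).symm⟩
  rw [Real.sqrt_sq hx, Real.sqrt_sq hy]
  calc F * G * (x + y) ^ 2 ≤ F * G * (F + G) * (F⁻¹ * x ^ 2 + G⁻¹ * y ^ 2) := by
        field_simp
        nlinarith [sq_nonneg (G * x - F * y)]
    _ ≤ F * G * (F + G) * ((F + G)⁻¹ * c) := by gcongr
    _ = F * G * c := by field_simp

theorem sqrt_volume_add_sqrt_volume_le {A B : Set (ℝ × ℝ)} (hAc : Convex ℝ A)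
    (hBc : Convex ℝ B) (hAk : IsCompact A) (hBk : IsCompact B) (hA : 0 < volume A)
    (hB : 0 < volume B) :
    √(volume A).toReal + √(volume B).toReal ≤ √(volume (A + B)).toReal := by
  have key := ENNReal.toReal_mono
    (ENNReal.mul_ne_top ENNReal.ofReal_ne_top (hAk.add hBk).measure_lt_top.ne)
    (inv_mul_volume_add_inv_mul_volume_le hAc hBc hAk hBk hA hB)
  have hF := iSup_sectionLength_pos hAk hA
  have hG := iSup_sectionLength_pos hBk hB
  rw [ENNReal.toReal_add (ENNReal.mul_ne_top ENNReal.ofReal_ne_top hAk.measure_lt_top.ne)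
      (ENNReal.mul_ne_top ENNReal.ofReal_ne_top hBk.measure_lt_top.ne),
    ENNReal.toReal_mul, ENNReal.toReal_mul, ENNReal.toReal_mul,
    ENNReal.toReal_ofReal (by positivity), ENNReal.toReal_ofReal (by positivity),
    ENNReal.toReal_ofReal (by positivity)] at key
  exact Real.sqrt_add_sqrt_le_sqrt_of_inv_mul_add_inv_mul_le hF hG ENNReal.toReal_nonneg
    ENNReal.toReal_nonneg key

def EuclideanSpace.finTwoEquivProd : E2 ≃L[ℝ] ℝ × ℝ :=
  (EuclideanSpace.equiv (Fin 2) ℝ).trans (ContinuousLinearEquiv.finTwoArrow ℝ ℝ)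

theorem EuclideanSpace.volume_image_finTwoEquivProd (S : Set E2) :
    volume (EuclideanSpace.finTwoEquivProd '' S) = volume S := by
  have hmp : MeasurePreserving EuclideanSpace.finTwoEquivProd :=
    (volume_preserving_finTwoArrow ℝ).comp
      (EuclideanSpace.volume_preserving_symm_measurableEquiv_toLp (Fin 2))
  rw [← hmp.measure_preimage_emb finTwoEquivProd.toHomeomorph.measurableEmbedding,
    finTwoEquivProd.injective.preimage_image]

theorem sqrt_mS_add_sqrt_mS_le {U V : Set E2} (hUc : Convex ℝ U) (hVc : Convex ℝ V)
    (hUk : IsCompact U) (hVk : IsCompact V) (hU : 0 < mS U) (hV : 0 < mS V) :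
    √(mS U) + √(mS V) ≤ √(mS (U + V)) := by
  let e := EuclideanSpace.finTwoEquivProd
  have key : √(volume (e '' U)).toReal + √(volume (e '' V)).toReal ≤
      √(volume (e '' U + e '' V)).toReal :=
    sqrt_volume_add_sqrt_volume_le (hUc.linear_image e.toLinearMap)
      (hVc.linear_image e.toLinearMap) (hUk.image e.continuous) (hVk.image e.continuous)
      (EuclideanSpace.volume_image_finTwoEquivProd U ▸ (ENNReal.toReal_pos_iff.1 hU).1)
      (EuclideanSpace.volume_image_finTwoEquivProd V ▸ (ENNReal.toReal_pos_iff.1 hV).1)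
  rwa [← Set.image_add e, EuclideanSpace.volume_image_finTwoEquivProd,
    EuclideanSpace.volume_image_finTwoEquivProd,
    EuclideanSpace.volume_image_finTwoEquivProd] at key

/-- The generalized Brunn-Minkowski inequality for sets in the cone with positive measure,
and its equivalence with the classical Brunn-Minkowski inequality. -/
theorem generalized_brunn_minkowski (U V : Set E2)
    (hU : InCone U) (hV : InCone V) (hmU : 0 < mS U) (hmV : 0 < mS V) :
    ((mS (U + V) - mS U - mS V) / 2) ^ 2 ≥ mS U * mS V ∧
    (((mS (U + V) - mS U - mS V) / 2) ^ 2 ≥ mS U * mS V ↔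
      Real.sqrt (mS (U + V)) ≥ Real.sqrt (mS U) + Real.sqrt (mS V)) := by
  obtain ⟨-, hUk, hUc, -⟩ := hU
  obtain ⟨-, hVk, hVc, -⟩ := hV
  have hBM := sqrt_mS_add_sqrt_mS_le hUc hVc hUk hVk hmU hmV
  have hmixed : √(mS U) * √(mS V) ≤ (mS (U + V) - mS U - mS V) / 2 := by
    have hmUV : 0 ≤ mS (U + V) := ENNReal.toReal_nonneg
    have hsq := pow_le_pow_left₀ (by positivity) hBM 2
    rw [add_sq, Real.sq_sqrt hmU.le, Real.sq_sqrt hmV.le, Real.sq_sqrt hmUV] at hsq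
    linarith
  have hquadratic : ((mS (U + V) - mS U - mS V) / 2) ^ 2 ≥ mS U * mS V :=
    calc mS U * mS V = (√(mS U) * √(mS V)) ^ 2 := by
          rw [mul_pow, Real.sq_sqrt hmU.le, Real.sq_sqrt hmV.le]
      _ ≤ _ := pow_le_pow_left₀ (by positivity) hmixed 2
  exact ⟨hquadratic, iff_of_true hquadratic hBM⟩
end
end

section
/- With the inner product ⟨[U,V];[P,Q]⟩ = (1/4π²)(2·o([U,V])·o([P,Q]) − 2π(m(U+P)+m(V+Q)−m(U+Q)−m(V+P))) on X_S, the kernel elements k_φ = [2B, (π/2)I^φ] satisfy K(φ,ψ) := ⟨k_φ, k_ψ⟩ = 2 − (π/2)·sin|φ − ψ|, where B is the unit disc and I^φ the unit segment at angle φ. -/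
open MeasureTheory Pointwise Filter Set
noncomputable section
/-- The inner product of the classes `[U,V]` and `[P,Q]` in the Radstrom space. -/
def ipS (U V P Q : Set E2) : ℝ :=
  (1 / (4 * Real.pi ^ 2)) *
    (2 * (perim U - perim V) * (perim P - perim Q) -
      2 * Real.pi * (mS (U + P) + mS (V + Q) - mS (U + Q) - mS (V + P)))
/-- The closed unit disc. -/
def diskB : Set E2 := Metric.closedBall (0 : E2) 1
/-- The unit vector at angle `φ`. -/
def dirc (φ : ℝ) : E2 := (WithLp.equiv 2 (Fin 2 → ℝ)).symm ![Real.cos φ, Real.sin φ]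

/-!
Both kernel elements have first component `2B`, so the inner product involves only three
perimeters and four areas. `I^φ + I^ψ` is a parallelogram of area `π² |sin (ψ - φ)|`, and
`dI^φ + rB` is a stadium: a `2d × 2r` rectangle with two half discs of radius `r` attached, of area
`4dr + πr²`. Since this area is exactly quadratic in `r`, the Steiner limit defining the perimeter
is constant, which gives `o(dI^φ) = 4d` and likewise `o(rB) = 2πr`.
-/

open scoped RealInnerProductSpace
open Metric Real

lemma real_inner_self_of_norm_eq_one {F : Type*} [NormedAddCommGroup F] [InnerProductSpace ℝ F]
    {v : F} (hv : ‖v‖ = 1) : ⟪v, v⟫ = 1 := by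
  rw [real_inner_self_eq_norm_sq, hv, one_pow]

lemma mem_closedBall_zero_iff_sq {F : Type*} [SeminormedAddCommGroup F] {x : F} {r : ℝ}
    (hr : 0 ≤ r) : x ∈ closedBall 0 r ↔ ‖x‖ ^ 2 ≤ r ^ 2 := by
  rw [mem_closedBall_zero_iff, pow_le_pow_iff_left₀ (norm_nonneg x) hr two_ne_zero]

lemma measure_inner_eq_const {E : Type*} [NormedAddCommGroup E] [InnerProductSpace ℝ E]
    [FiniteDimensional ℝ E] [MeasurableSpace E] [BorelSpace E] (μ : Measure E)
    [μ.IsAddHaarMeasure] {v : E} (hv : v ≠ 0) (c : ℝ) : μ {x | ⟪v, x⟫ = c} = 0 := by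
  have hvv : ⟪v, v⟫ ≠ 0 := inner_self_ne_zero.2 hv
  have hker : LinearMap.ker (innerₛₗ ℝ v) ≠ ⊤ := fun h =>
    hvv (LinearMap.mem_ker.1 (h ▸ Submodule.mem_top : v ∈ LinearMap.ker (innerₛₗ ℝ v)))
  have hset : {x | ⟪v, x⟫ = c} =
      (· + -((c / ⟪v, v⟫) • v)) ⁻¹' (LinearMap.ker (innerₛₗ ℝ v) : Set E) := by
    ext x
    simp only [mem_ofPred_eq, mem_preimage, SetLike.mem_coe, LinearMap.mem_ker,
      innerₛₗ_apply_apply, inner_add_right, inner_neg_right, real_inner_smul_right]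
    rw [div_mul_cancel₀ c hvv, ← sub_eq_add_neg, sub_eq_zero]
  rw [hset, measure_preimage_add_right, Measure.addHaar_submodule μ _ hker]

lemma inner_E2 (x y : E2) : ⟪x, y⟫ = x 0 * y 0 + x 1 * y 1 := by
  simp [PiLp.inner_apply, Fin.sum_univ_two]; ring

lemma perp_apply_zero (v : E2) : perp v 0 = -v 1 := rfl

lemma perp_apply_one (v : E2) : perp v 1 = v 0 := rfl

lemma dirc_apply_zero (θ : ℝ) : dirc θ 0 = cos θ := rfl

lemma dirc_apply_one (θ : ℝ) : dirc θ 1 = sin θ := rfl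

lemma inner_self_perp (v : E2) : ⟪v, perp v⟫ = 0 := by
  rw [inner_E2, perp_apply_zero, perp_apply_one]; ring

lemma inner_perp_self (v : E2) : ⟪perp v, v⟫ = 0 := by
  rw [real_inner_comm, inner_self_perp]

lemma inner_perp_perp (v : E2) : ⟪perp v, perp v⟫ = ⟪v, v⟫ := by
  rw [inner_E2, inner_E2, perp_apply_zero, perp_apply_one]; ring

lemma norm_perp (v : E2) : ‖perp v‖ = ‖v‖ := by
  rw [norm_eq_sqrt_real_inner, norm_eq_sqrt_real_inner, inner_perp_perp]

lemma orthonormal_perp {v : E2} (hv : ‖v‖ = 1) : Orthonormal ℝ ![v, perp v] := by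
  rw [orthonormal_iff_ite]
  intro i j
  fin_cases i <;> fin_cases j <;> simp [hv, norm_perp, inner_self_perp, inner_perp_self]

def perpBasis {v : E2} (hv : ‖v‖ = 1) : OrthonormalBasis (Fin 2) ℝ E2 :=
  .mk (orthonormal_perp hv)
    ((orthonormal_perp hv).linearIndependent.span_eq_top_of_card_eq_finrank (by simp)).ge

lemma sq_norm_eq_inner_sq_add_inner_perp_sq {v : E2} (hv : ‖v‖ = 1) (x : E2) :
    ‖x‖ ^ 2 = ⟪v, x⟫ ^ 2 + ⟪perp v, x⟫ ^ 2 := by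
  simpa [perpBasis, Fin.sum_univ_two] using ((perpBasis hv).sum_sq_norm_inner_right x).symm

lemma eq_inner_smul_add_inner_perp_smul {v : E2} (hv : ‖v‖ = 1) (x : E2) :
    x = ⟪v, x⟫ • v + ⟪perp v, x⟫ • perp v := by
  simpa [perpBasis, Fin.sum_univ_two] using ((perpBasis hv).sum_repr' x).symm

lemma sq_norm_sub_smul {v : E2} (hv : ‖v‖ = 1) (x : E2) (t : ℝ) :
    ‖x - t • v‖ ^ 2 = (⟪v, x⟫ - t) ^ 2 + ⟪perp v, x⟫ ^ 2 := by
  rw [sq_norm_eq_inner_sq_add_inner_perp_sq hv, inner_sub_right, inner_sub_right,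
    real_inner_smul_right, real_inner_smul_right, inner_perp_self,
    real_inner_self_of_norm_eq_one hv, mul_one, mul_zero, sub_zero]

section Stadium

variable {v x : E2} {d r : ℝ}

lemma mem_seg_add_closedBall_iff (hv : ‖v‖ = 1) (hr : 0 ≤ r) :
    x ∈ seg v d + closedBall 0 r ↔
      ∃ t ∈ Icc (-d) d, (⟪v, x⟫ - t) ^ 2 + ⟪perp v, x⟫ ^ 2 ≤ r ^ 2 := by
  simp only [← sq_norm_sub_smul hv, ← mem_closedBall_zero_iff_sq hr]
  constructor
  · rintro ⟨_, ⟨t, ht, rfl⟩, y, hy, rfl⟩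
    exact ⟨t, ht, by rwa [add_sub_cancel_left]⟩
  · rintro ⟨t, ht, h⟩
    exact ⟨t • v, ⟨t, ht, rfl⟩, x - t • v, h, add_sub_cancel _ _⟩

lemma mem_seg_add_seg_perp_iff (hv : ‖v‖ = 1) :
    x ∈ seg v d + seg (perp v) r ↔ ⟪v, x⟫ ∈ Icc (-d) d ∧ ⟪perp v, x⟫ ∈ Icc (-r) r := by
  constructor
  · rintro ⟨_, ⟨s, hs, rfl⟩, _, ⟨u, hu, rfl⟩, rfl⟩
    simpa [inner_add_right, real_inner_smul_right, inner_self_perp, inner_perp_self, hv,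
      norm_perp] using And.intro hs hu
  · rintro ⟨ha, hc⟩
    rw [eq_inner_smul_add_inner_perp_smul hv x]
    exact add_mem_add ⟨_, ha, rfl⟩ ⟨_, hc, rfl⟩

def halfBall (v : E2) (r : ℝ) (s : Set ℝ) : Set E2 := closedBall 0 r ∩ {y | ⟪v, y⟫ ∈ s}

lemma mem_vadd_halfBall_iff (hv : ‖v‖ = 1) (hr : 0 ≤ r) (t : ℝ) (s : Set ℝ) :
    x ∈ (t • v) +ᵥ halfBall v r s ↔
      (⟪v, x⟫ - t) ^ 2 + ⟪perp v, x⟫ ^ 2 ≤ r ^ 2 ∧ ⟪v, x⟫ - t ∈ s := by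
  rw [mem_vadd_set_iff_neg_vadd_mem, vadd_eq_add, neg_add_eq_sub, halfBall, mem_inter_iff,
    mem_closedBall_zero_iff_sq hr, sq_norm_sub_smul hv, mem_ofPred_eq, inner_sub_right,
    real_inner_smul_right, real_inner_self_of_norm_eq_one hv, mul_one]

/-- The point of `[-d, d]` nearest to `a` is `a`, `d` or `-d`. -/
lemma exists_sq_add_sq_le_iff {a c : ℝ} (hd : 0 ≤ d) (hr : 0 ≤ r) :
    (∃ t ∈ Icc (-d) d, (a - t) ^ 2 + c ^ 2 ≤ r ^ 2) ↔
      ((a ∈ Icc (-d) d ∧ c ∈ Icc (-r) r) ∨ ((a - d) ^ 2 + c ^ 2 ≤ r ^ 2 ∧ a - d ∈ Ici 0)) ∨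
        ((a - -d) ^ 2 + c ^ 2 ≤ r ^ 2 ∧ a - -d ∈ Iic 0) := by
  constructor
  · rintro ⟨t, ⟨hdt, htd⟩, h⟩
    rcases lt_or_ge d a with hda | had
    · exact .inl (.inr ⟨by nlinarith, by simp only [mem_Ici]; linarith⟩)
    rcases lt_or_ge a (-d) with had' | hda'
    · exact .inr ⟨by nlinarith, by simp only [mem_Iic]; linarith⟩
    exact .inl (.inl ⟨⟨hda', had⟩, abs_le_of_sq_le_sq' (by nlinarith) hr⟩)
  · rintro ((⟨ha, hc⟩ | ⟨h, -⟩) | ⟨h, -⟩)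
    · exact ⟨a, ha, by nlinarith [hc.1, hc.2]⟩
    · exact ⟨d, ⟨by linarith, le_rfl⟩, h⟩
    · exact ⟨-d, ⟨le_rfl, by linarith⟩, h⟩

lemma seg_add_closedBall_eq (hv : ‖v‖ = 1) (hd : 0 ≤ d) (hr : 0 ≤ r) :
    seg v d + closedBall 0 r =
      (seg v d + seg (perp v) r ∪ (d • v +ᵥ halfBall v r (Ici 0))) ∪
        ((-d) • v +ᵥ halfBall v r (Iic 0)) := by
  ext x
  simp only [mem_union, mem_seg_add_closedBall_iff hv hr, mem_seg_add_seg_perp_iff hv,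
    mem_vadd_halfBall_iff hv hr]
  exact exists_sq_add_sq_le_iff hd hr

end Stadium

lemma measurableSet_halfBall (v : E2) (r : ℝ) {s : Set ℝ} (hs : MeasurableSet s) :
    MeasurableSet (halfBall v r s) :=
  measurableSet_closedBall.inter ((continuous_const.inner continuous_id).measurable hs)

lemma volume_halfBall_Ici_add_Iic {v : E2} (hv : v ≠ 0) (r : ℝ) :
    volume (halfBall v r (Ici 0)) + volume (halfBall v r (Iic 0)) =
      volume (closedBall (0 : E2) r) := by
  have hunion : halfBall v r (Ici 0) ∪ halfBall v r (Iic 0) = closedBall 0 r := by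
    simp only [halfBall, ← inter_union_distrib_left, inter_eq_left]
    exact fun x _ => le_total 0 ⟪v, x⟫
  have hinter : volume (halfBall v r (Ici 0) ∩ halfBall v r (Iic 0)) = 0 :=
    measure_mono_null (fun x hx => le_antisymm hx.2.2 hx.1.2) (measure_inner_eq_const volume hv 0)
  rw [← measure_union_add_inter _ (measurableSet_halfBall v r measurableSet_Iic), hunion, hinter,
    add_zero]

def box (d e : ℝ) : Set E2 := {x | x 0 ∈ Icc (-d) d ∧ x 1 ∈ Icc (-e) e}

lemma volume_box (d e : ℝ) :
    volume (box d e) = ENNReal.ofReal (2 * d) * ENNReal.ofReal (2 * e) := by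
  have hbox : box d e = (MeasurableEquiv.toLp 2 (Fin 2 → ℝ)).symm ⁻¹'
      Set.univ.pi ![Icc (-d) d, Icc (-e) e] := by
    ext x
    simp only [box, MeasurableEquiv.toLp, mem_ofPred_eq, mem_preimage, Set.mem_pi, mem_univ,
      forall_const, Fin.forall_fin_two, Matrix.cons_val_zero, Matrix.cons_val_one]
    rfl
  rw [hbox, (EuclideanSpace.volume_preserving_symm_measurableEquiv_toLp (Fin 2)).measure_preimage
    (MeasurableSet.univ_pi fun i => by fin_cases i <;> exact measurableSet_Icc).nullMeasurableSet,
    volume_pi_pi, Fin.prod_univ_two]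
  simp [Real.volume_Icc, two_mul]

def pairMap (v w : E2) : E2 →ₗ[ℝ] E2 :=
  (EuclideanSpace.basisFun (Fin 2) ℝ).toBasis.constr ℝ ![v, w]

lemma pairMap_apply (v w x : E2) : pairMap v w x = x 0 • v + x 1 • w := by
  simp [pairMap, Module.Basis.constr_apply_fintype, Fin.sum_univ_two]

lemma det_pairMap (v w : E2) : LinearMap.det (pairMap v w) = v 0 * w 1 - w 0 * v 1 := by
  rw [← LinearMap.det_toMatrix (EuclideanSpace.basisFun (Fin 2) ℝ).toBasis, Matrix.det_fin_two]
  simp [LinearMap.toMatrix_apply, pairMap_apply]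

lemma seg_add_seg_eq_image_box (v w : E2) (d e : ℝ) :
    seg v d + seg w e = pairMap v w '' box d e := by
  ext x
  constructor
  · rintro ⟨-, ⟨s, hs, rfl⟩, -, ⟨t, ht, rfl⟩, rfl⟩
    exact ⟨!₂[s, t], ⟨hs, ht⟩, by simp [pairMap_apply]⟩
  · rintro ⟨y, ⟨h0, h1⟩, rfl⟩
    rw [pairMap_apply]
    exact add_mem_add ⟨y 0, h0, rfl⟩ ⟨y 1, h1, rfl⟩

lemma volume_seg_add_seg (v w : E2) {d e : ℝ} (hd : 0 ≤ d) :
    volume (seg v d + seg w e) =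
      ENNReal.ofReal (|v 0 * w 1 - w 0 * v 1| * (2 * d * (2 * e))) := by
  rw [seg_add_seg_eq_image_box, Measure.addHaar_image_linearMap, det_pairMap, volume_box,
    ← ENNReal.ofReal_mul (by positivity), ← ENNReal.ofReal_mul (abs_nonneg _)]

lemma volume_seg_add_seg_perp {v : E2} (hv : ‖v‖ = 1) {d : ℝ} (hd : 0 ≤ d) (r : ℝ) :
    volume (seg v d + seg (perp v) r) = ENNReal.ofReal (4 * d * r) := by
  have hv2 : v 0 ^ 2 + v 1 ^ 2 = 1 := by
    rw [← real_inner_self_of_norm_eq_one hv, inner_E2]; ring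
  rw [volume_seg_add_seg v (perp v) hd, perp_apply_zero, perp_apply_one,
    show v 0 * v 0 - -v 1 * v 1 = 1 by linarith, abs_one, one_mul]
  ring_nf

lemma volume_seg_add_closedBall {v : E2} (hv : ‖v‖ = 1) {d r : ℝ} (hd : 0 ≤ d) (hr : 0 ≤ r) :
    volume (seg v d + closedBall 0 r) =
      ENNReal.ofReal (4 * d * r) + volume (closedBall (0 : E2) r) := by
  have hv0 : v ≠ 0 := ne_zero_of_norm_ne_zero (hv.trans_ne one_ne_zero)
  have hrect_cap :
      AEDisjoint volume (seg v d + seg (perp v) r) (d • v +ᵥ halfBall v r (Ici 0)) := by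
    refine measure_mono_null (fun x ⟨hx₁, hx₂⟩ => ?_) (measure_inner_eq_const volume hv0 d)
    have h₁ := ((mem_seg_add_seg_perp_iff hv).1 hx₁).1.2
    have h₂ := mem_Ici.1 ((mem_vadd_halfBall_iff hv hr d _).1 hx₂).2
    show ⟪v, x⟫ = d
    linarith
  have hcap : AEDisjoint volume (seg v d + seg (perp v) r ∪ (d • v +ᵥ halfBall v r (Ici 0)))
      ((-d) • v +ᵥ halfBall v r (Iic 0)) := by
    refine measure_mono_null (fun x ⟨hx₁, hx₂⟩ => ?_) (measure_inner_eq_const volume hv0 (-d))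
    have h₂ := mem_Iic.1 ((mem_vadd_halfBall_iff hv hr (-d) _).1 hx₂).2
    have h₁ : -d ≤ ⟪v, x⟫ := by
      rcases hx₁ with hx₁ | hx₁
      · exact ((mem_seg_add_seg_perp_iff hv).1 hx₁).1.1
      · have := mem_Ici.1 ((mem_vadd_halfBall_iff hv hr d _).1 hx₁).2
        linarith
    show ⟪v, x⟫ = -d
    linarith
  rw [seg_add_closedBall_eq hv hd hr,
    measure_union₀ ((measurableSet_halfBall v r measurableSet_Iic).const_vadd _).nullMeasurableSet
      hcap,
    measure_union₀ ((measurableSet_halfBall v r measurableSet_Ici).const_vadd _).nullMeasurableSet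
      hrect_cap,
    measure_vadd, measure_vadd, add_assoc, volume_halfBall_Ici_add_Iic hv0,
    volume_seg_add_seg_perp hv hd]

lemma span_singleton_ne_top (v : E2) : (ℝ ∙ v) ≠ ⊤ := by
  intro h
  have hle : Module.finrank ℝ (ℝ ∙ v) ≤ 1 := by
    simpa using finrank_span_le_card ({v} : Set E2)
  rw [h, finrank_top, finrank_euclideanSpace_fin] at hle
  omega

lemma volume_seg (v : E2) (d : ℝ) : volume (seg v d) = 0 :=
  measure_mono_null (fun _ ⟨t, _, ht⟩ => ht ▸ Submodule.mem_span_singleton.2 ⟨t, rfl⟩)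
    (Measure.addHaar_submodule volume _ (span_singleton_ne_top v))

lemma mS_seg (v : E2) (d : ℝ) : mS (seg v d) = 0 := by
  rw [mS, volume_seg, ENNReal.toReal_zero]

lemma mS_closedBall {r : ℝ} (hr : 0 ≤ r) : mS (closedBall (0 : E2) r) = π * r ^ 2 := by
  rw [mS, EuclideanSpace.volume_closedBall_fin_two, ENNReal.toReal_mul, ENNReal.toReal_pow,
    ENNReal.toReal_ofReal hr, ENNReal.toReal_ofReal pi_nonneg, mul_comm]

lemma mS_seg_add_closedBall {v : E2} (hv : ‖v‖ = 1) {d r : ℝ} (hd : 0 ≤ d) (hr : 0 ≤ r) :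
    mS (seg v d + closedBall 0 r) = 4 * d * r + π * r ^ 2 := by
  rw [mS, volume_seg_add_closedBall hv hd hr, ENNReal.toReal_add ENNReal.ofReal_ne_top
    measure_closedBall_lt_top.ne, ENNReal.toReal_ofReal (by positivity), ← mS, mS_closedBall hr]

lemma mS_seg_add_seg (v w : E2) {d e : ℝ} (hd : 0 ≤ d) (he : 0 ≤ e) :
    mS (seg v d + seg w e) = |v 0 * w 1 - w 0 * v 1| * (2 * d * (2 * e)) := by
  rw [mS, volume_seg_add_seg v w hd, ENNReal.toReal_ofReal (by positivity)]

lemma smul_closedBall_zero_one {t : ℝ} (ht : 0 ≤ t) :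
    t • closedBall (0 : E2) 1 = closedBall 0 t := by
  rw [smul_closedBall t 0 zero_le_one, smul_zero, norm_of_nonneg ht, mul_one]

lemma perim_eq_of_mS_add_smul_closedBall {U : Set E2} {c : ℝ}
    (h : ∀ t > 0, mS (U + t • closedBall (0 : E2) 1) = mS U + c * t + π * t ^ 2) :
    perim U = c := by
  refine Tendsto.limUnder_eq (tendsto_const_nhds.congr' (eventually_nhdsWithin_of_forall ?_))
  intro t ht
  dsimp only
  rw [eq_div_iff (mem_Ioi.1 ht).ne', h t ht]
  ring

lemma perim_closedBall {r : ℝ} (hr : 0 ≤ r) : perim (closedBall (0 : E2) r) = 2 * π * r := by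
  refine perim_eq_of_mS_add_smul_closedBall fun t ht => ?_
  rw [smul_closedBall_zero_one ht.le, closedBall_add_closedBall hr ht.le, add_zero,
    mS_closedBall (by positivity), mS_closedBall hr]
  ring

lemma perim_seg {v : E2} (hv : ‖v‖ = 1) {d : ℝ} (hd : 0 ≤ d) : perim (seg v d) = 4 * d := by
  refine perim_eq_of_mS_add_smul_closedBall fun t ht => ?_
  rw [smul_closedBall_zero_one ht.le, mS_seg_add_closedBall hv hd ht.le, mS_seg]
  ring

lemma norm_dirc (θ : ℝ) : ‖dirc θ‖ = 1 := by
  rw [norm_eq_sqrt_real_inner, inner_E2, Real.sqrt_eq_one, dirc_apply_zero, dirc_apply_one, ← sq,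
    ← sq, cos_sq_add_sin_sq]

lemma mS_seg_dirc_add_seg_dirc (φ ψ : ℝ) {d e : ℝ} (hd : 0 ≤ d) (he : 0 ≤ e) :
    mS (seg (dirc φ) d + seg (dirc ψ) e) = |sin (ψ - φ)| * (2 * d * (2 * e)) := by
  rw [mS_seg_add_seg _ _ hd he, dirc_apply_zero, dirc_apply_zero, dirc_apply_one, dirc_apply_one,
    sin_sub, mul_comm (sin ψ)]

/-- The reproducing kernel: for `k_φ = [2B, (π/2)·I^φ]` one has
`⟨k_φ, k_ψ⟩ = 2 - (π/2)·sin|φ - ψ|`. -/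
theorem reproducing_kernel_formula (φ ψ : ℝ)
    (hφ : φ ∈ Set.Icc 0 Real.pi) (hψ : ψ ∈ Set.Icc 0 Real.pi) :
    ipS ((2 : ℝ) • diskB) (seg (dirc φ) (Real.pi / 2))
        ((2 : ℝ) • diskB) (seg (dirc ψ) (Real.pi / 2)) =
      2 - (Real.pi / 2) * Real.sin |φ - ψ| := by
  have hd : 0 ≤ π / 2 := by positivity
  have hsin : |sin (ψ - φ)| = sin |φ - ψ| := by
    have hle : |ψ - φ| ≤ π := abs_le.2 ⟨by linarith [hφ.2, hψ.1], by linarith [hφ.1, hψ.2]⟩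
    rw [abs_sin_eq_sin_abs_of_abs_le_pi hle, abs_sub_comm]
  rw [ipS, diskB, smul_closedBall_zero_one zero_le_two, perim_closedBall zero_le_two,
    perim_seg (norm_dirc φ) hd, perim_seg (norm_dirc ψ) hd,
    closedBall_add_closedBall zero_le_two zero_le_two, add_zero, mS_closedBall (by norm_num),
    mS_seg_dirc_add_seg_dirc φ ψ hd hd, hsin, add_comm (closedBall _ _),
    mS_seg_add_closedBall (norm_dirc ψ) hd zero_le_two,
    mS_seg_add_closedBall (norm_dirc φ) hd zero_le_two]
  field_simp
  ring
end
end
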